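/- arXiv:1103.4399 — 5 statements merged into one kernel-verified Lean document; each statement's English description precedes it below -/
import Mathlib

section
/- Let A be a normed wqo (a wqo equipped with a norm |·|_A : A → ℕ such that {x ∈ A : |x|_A < n} is finite for every n), let g : ℕ → ℕ be a control function, and let n ∈ ℕ. Then there exists a finite maximal length L ∈ ℕ for (g,n)-controlled bad sequences over A; i.e., every (g,n)-controlled bad sequence has length at most L and some has length L. -/
/-!
If controlled bad sequences had unbounded length, then, since the norm is proper, there are only
finitely many controlled sequences of each length, so Kőnig's lemma would produce an infinite
sequence all of whose initial segments are bad, contradicting the wqo property. Once the lengths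
are bounded, the maximal one is attained.
-/

/-- A sequence (as a list) is bad: no i < j with x_i ≤ x_j. -/
def IsBad {A : Type*} (le : A → A → Prop) (w : List A) : Prop :=
  ∀ i j : Fin w.length, (i : ℕ) < (j : ℕ) → ¬ le (w.get i) (w.get j)

/-- A sequence is (g,n)-controlled: |x_i| < g^i(n). -/
def IsControlled {A : Type*} (nrm : A → ℕ) (g : ℕ → ℕ) (n : ℕ) (w : List A) : Prop :=
  ∀ i : Fin w.length, nrm (w.get i) < g^[(i : ℕ)] n

theorem exists_seq_forall_ofFn_of_forall_finite {A : Type*} {P : List A → Prop}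
    (hprefix : ∀ ⦃w w'⦄, w <+: w' → P w' → P w)
    (hfin : ∀ k, {w | P w ∧ w.length = k}.Finite)
    (hne : ∀ k, ∃ w, P w ∧ w.length = k) :
    ∃ f : ℕ → A, ∀ k, P (List.ofFn fun i : Fin k => f i) := by
  let α (k : ℕ) := {w // P w ∧ w.length = k}
  have : ∀ k, Finite (α k) := fun k => (hfin k).to_subtype
  have : ∀ k, Nonempty (α k) := fun k => nonempty_subtype.mpr (hne k)
  obtain ⟨F, hF⟩ := exists_seq_forall_proj_of_forall_finite (α := α)
    (fun {i _} hij w => ⟨w.1.take i, hprefix (List.take_prefix _ _) w.2.1, by simp [w.2.2, hij]⟩)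
    (fun _ w => Subtype.ext (List.take_of_length_le w.2.2.le))
    (fun _ _ _ hij _ _ => Subtype.ext (by simp [List.take_take, hij]))
    (fun _ _ => Set.toFinite _)
  have hlen (k) : (F k).1.length = k := (F k).2.2
  refine ⟨fun i => (F (i + 1)).1[i]'(by simp [hlen]), fun k => ?_⟩
  convert (F k).2.1
  refine List.ext_getElem (by simp [hlen]) fun i hi _ => ?_
  have hik : i + 1 ≤ k := by simpa using hi
  have htake := congrArg Subtype.val (hF hik)
  simp only [List.getElem_ofFn, ← htake, List.getElem_take]

section

variable {A : Type*} {le : A → A → Prop} {nrm : A → ℕ} {g : ℕ → ℕ} {n : ℕ}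

theorem IsBad.of_prefix {w w' : List A} (h : IsBad le w') (hw : w <+: w') : IsBad le w :=
  fun i j hij hle => h (i.castLE hw.length_le) (j.castLE hw.length_le) hij <| by
    simpa [hw.getElem] using hle

theorem IsControlled.of_prefix {w w' : List A} (h : IsControlled nrm g n w') (hw : w <+: w') :
    IsControlled nrm g n w := fun i => by
  simpa [hw.getElem] using h (i.castLE hw.length_le)

theorem isBad_nil : IsBad le ([] : List A) := fun i => i.elim0

theorem isControlled_nil : IsControlled nrm g n ([] : List A) := fun i => i.elim0

theorem not_forall_isBad_ofFn (hwqo : ∀ f : ℕ → A, ∃ i j, i < j ∧ le (f i) (f j)) (f : ℕ → A) :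
    ¬ ∀ k, IsBad le (List.ofFn fun i : Fin k => f i) := fun hbad => by
  obtain ⟨i, j, hij, hle⟩ := hwqo f
  exact hbad (j + 1) ⟨i, by rw [List.length_ofFn]; omega⟩ ⟨j, by rw [List.length_ofFn]; omega⟩ hij (by simpa [-List.ofFn_succ] using hle)

theorem finite_isControlled_length_eq (hproper : ∀ n, {x : A | nrm x < n}.Finite) (k : ℕ) :
    {w : List A | IsControlled nrm g n w ∧ w.length = k}.Finite := by
  refine ((Set.Finite.pi fun i : Fin k => hproper (g^[i] n)).image List.ofFn).subset ?_
  rintro w ⟨hw, rfl⟩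
  exact ⟨w.get, fun i _ => hw i, List.ofFn_get w⟩

theorem exists_length_bound_of_isBad_isControlled
    (hwqo : ∀ f : ℕ → A, ∃ i j, i < j ∧ le (f i) (f j))
    (hproper : ∀ n, {x : A | nrm x < n}.Finite) :
    ∃ L, ∀ w : List A, IsBad le w → IsControlled nrm g n w → w.length ≤ L := by
  by_contra! hlong
  obtain ⟨f, hf⟩ := exists_seq_forall_ofFn_of_forall_finite
    (P := fun w => IsBad le w ∧ IsControlled nrm g n w)
    (fun _ _ hw h => ⟨h.1.of_prefix hw, h.2.of_prefix hw⟩)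
    (fun k => (finite_isControlled_length_eq hproper k).subset fun _ h => ⟨h.1.2, h.2⟩)
    (fun k => by
      obtain ⟨w, hbad, hctrl, hk⟩ := hlong k
      exact ⟨w.take k, ⟨hbad.of_prefix (List.take_prefix _ _),
        hctrl.of_prefix (List.take_prefix _ _)⟩, List.length_take_of_le hk.le⟩)
  exact not_forall_isBad_ofFn hwqo f fun k => (hf k).1

end

theorem stmt2_general {A : Type*} (le : A → A → Prop) (nrm : A → ℕ)
    (hwqo : ∀ f : ℕ → A, ∃ i j, i < j ∧ le (f i) (f j))
    (hproper : ∀ n, {x : A | nrm x < n}.Finite)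
    (g : ℕ → ℕ) (n : ℕ) :
    ∃ L : ℕ,
      (∀ w : List A, IsBad le w → IsControlled nrm g n w → w.length ≤ L) ∧
      (∃ w : List A, IsBad le w ∧ IsControlled nrm g n w ∧ w.length = L) := by
  let lengths := {l | ∃ w : List A, IsBad le w ∧ IsControlled nrm g n w ∧ w.length = l}
  obtain ⟨L, hL⟩ := exists_length_bound_of_isBad_isControlled (g := g) (n := n) hwqo hproper
  have hbdd : BddAbove lengths := ⟨L, by rintro _ ⟨w, hbad, hctrl, rfl⟩; exact hL w hbad hctrl⟩
  have hne : lengths.Nonempty := ⟨0, [], isBad_nil, isControlled_nil, rfl⟩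
  exact ⟨sSup lengths, fun w hbad hctrl => le_csSup hbdd ⟨w, hbad, hctrl, rfl⟩,
    Nat.sSup_mem hne hbdd⟩

/-- For a normed wqo (proper norm) and any control (g,n) there is a finite
maximal length for (g,n)-controlled bad sequences. -/
theorem stmt2 {A : Type*} (le : A → A → Prop) (nrm : A → ℕ)
    (hrefl : ∀ a, le a a)
    (htrans : ∀ a b c, le a b → le b c → le a c)
    (hwqo : ∀ f : ℕ → A, ∃ i j, i < j ∧ le (f i) (f j))
    (hproper : ∀ n, {x : A | nrm x < n}.Finite)
    (g : ℕ → ℕ) (n : ℕ) :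
    ∃ L : ℕ,
      (∀ w : List A, IsBad le w → IsControlled nrm g n w → w.length ≤ L) ∧
      (∃ w : List A, IsBad le w ∧ IsControlled nrm g n w ∧ w.length = L) :=
  stmt2_general le nrm hwqo hproper g n
end

section
/- Descent Equation: For a normed wqo A, a control function g, and n ∈ ℕ, the maximal length L_A(n) of (g,n)-controlled bad sequences satisfies L_A(n) = max over x ∈ A_{<n} of (1 + L_{A/x}(g(n))), where the maximum over the empty set is 0. -/
/-- `L` is the maximal length of (g,n)-controlled bad sequences. -/
def MaxLen {A : Type*} (le : A → A → Prop) (nrm : A → ℕ) (g : ℕ → ℕ) (n L : ℕ) : Prop :=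
  (∀ w : List A, IsBad le w → IsControlled nrm g n w → w.length ≤ L) ∧
  (∃ w : List A, IsBad le w ∧ IsControlled nrm g n w ∧ w.length = L)

section

variable {A B : Type*}

theorem isBad_iff_pairwise (le : A → A → Prop) (w : List A) :
    IsBad le w ↔ w.Pairwise fun a b => ¬ le a b :=
  (List.pairwise_iff_get (R := fun a b => ¬ le a b) (l := w)).symm

theorem isControlled_cons_iff {nrm : A → ℕ} {g : ℕ → ℕ} {n : ℕ} {x : A} {w : List A} :
    IsControlled nrm g n (x :: w) ↔ nrm x < n ∧ IsControlled nrm g (g n) w := by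
  show (∀ i : Fin (w.length + 1), _) ↔ _
  simp [Fin.forall_fin_succ, IsControlled, Function.iterate_succ_apply]

theorem isControlled_map_iff {nrm : A → ℕ} {g : ℕ → ℕ} {n : ℕ} (f : B → A) (w : List B) :
    IsControlled nrm g n (w.map f) ↔ IsControlled (fun b => nrm (f b)) g n w := by
  induction w generalizing n with
  | nil => exact ⟨fun _ i => i.elim0, fun _ i => i.elim0⟩
  | cons b w ih => simp only [List.map_cons, isControlled_cons_iff, ih]

end

namespace MaxLen

variable {A : Type*} {le : A → A → Prop} {nrm : A → ℕ} {g : ℕ → ℕ} {n LA : ℕ}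

theorem one_add_le (hLA : MaxLen le nrm g n LA) {x : A} (hx : nrm x < n) {LX : ℕ}
    (hLX : MaxLen (fun y z : {y : A // ¬ le x y} => le y.1 z.1)
      (fun y : {y : A // ¬ le x y} => nrm y.1) g (g n) LX) :
    1 + LX ≤ LA := by
  obtain ⟨w, hbad, hctrl, rfl⟩ := hLX.2
  have hbad' : IsBad le (x :: w.map Subtype.val) := by
    rw [isBad_iff_pairwise] at hbad ⊢
    rw [List.pairwise_cons, List.pairwise_map, List.forall_mem_map]
    exact ⟨fun y _ => y.2, hbad⟩
  have hctrl' : IsControlled nrm g n (x :: w.map Subtype.val) :=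
    isControlled_cons_iff.2 ⟨hx, (isControlled_map_iff _ _).2 hctrl⟩
  simpa [add_comm] using hLA.1 _ hbad' hctrl'

theorem exists_le_one_add (hLA : MaxLen le nrm g n LA) {LX : A → ℕ}
    (hLX : ∀ x : A, nrm x < n →
      MaxLen (fun y z : {y : A // ¬ le x y} => le y.1 z.1)
        (fun y : {y : A // ¬ le x y} => nrm y.1) g (g n) (LX x))
    (hpos : 0 < LA) :
    ∃ x : A, nrm x < n ∧ LA ≤ 1 + LX x := by
  obtain ⟨_ | ⟨x, w⟩, hbad, hctrl, rfl⟩ := hLA.2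
  · simp at hpos
  obtain ⟨hxw, hbad⟩ := List.pairwise_cons.1 ((isBad_iff_pairwise _ _).1 hbad)
  obtain ⟨hx, hctrl⟩ := isControlled_cons_iff.1 hctrl
  lift w to List {y : A // ¬ le x y} using hxw
  rw [List.pairwise_map, ← isBad_iff_pairwise] at hbad
  rw [isControlled_map_iff] at hctrl
  refine ⟨x, hx, ?_⟩
  rw [List.length_cons, List.length_map, add_comm]
  exact Nat.add_le_add_left ((hLX x hx).1 w hbad hctrl) 1

end MaxLen

theorem stmt3_general {A : Type*} (le : A → A → Prop) (nrm : A → ℕ)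
    (g : ℕ → ℕ) (n : ℕ) (LA : ℕ) (LX : A → ℕ)
    (hLA : MaxLen le nrm g n LA)
    (hLX : ∀ x : A, nrm x < n →
      MaxLen (fun y z : {y : A // ¬ le x y} => le y.1 z.1)
        (fun y : {y : A // ¬ le x y} => nrm y.1) g (g n) (LX x)) :
    LA = sSup {m : ℕ | ∃ x : A, nrm x < n ∧ m = 1 + LX x} := by
  have bound : ∀ m ∈ {m : ℕ | ∃ x : A, nrm x < n ∧ m = 1 + LX x}, m ≤ LA := by
    rintro _ ⟨x, hx, rfl⟩
    exact hLA.one_add_le hx (hLX x hx)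
  refine le_antisymm ?_ (csSup_le' bound)
  rcases Nat.eq_zero_or_pos LA with rfl | hpos
  · exact Nat.zero_le _
  obtain ⟨x, hx, hle⟩ := hLA.exists_le_one_add hLX hpos
  exact hle.trans (le_csSup ⟨LA, bound⟩ ⟨x, hx, rfl⟩)

/-- Descent Equation: L_A(n) = max_{x ∈ A_{<n}} (1 + L_{A/x}(g(n))),
the max over the empty set being 0 (`sSup` on `ℕ`). -/
theorem stmt3 {A : Type*} (le : A → A → Prop) (nrm : A → ℕ)
    (hrefl : ∀ a, le a a)
    (htrans : ∀ a b c, le a b → le b c → le a c)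
    (hwqo : ∀ f : ℕ → A, ∃ i j, i < j ∧ le (f i) (f j))
    (hproper : ∀ n, {x : A | nrm x < n}.Finite)
    (g : ℕ → ℕ) (n : ℕ) (LA : ℕ) (LX : A → ℕ)
    (hLA : MaxLen le nrm g n LA)
    (hLX : ∀ x : A, nrm x < n →
      MaxLen (fun y z : {y : A // ¬ le x y} => le y.1 z.1)
        (fun y : {y : A // ¬ le x y} => nrm y.1) g (g n) (LX x)) :
    LA = sSup {m : ℕ | ∃ x : A, nrm x < n ∧ m = 1 + LX x} :=
  stmt3_general le nrm g n LA LX hLA hLX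
end

section
/- For normed wqos A and B and elements x ∈ A, y ∈ B, the residual (A × B)/⟨x,y⟩ reflects into ((A/x) × B) + (A × (B/y)). -/
/-- Nwqo reflection: order-reflecting and norm-decreasing map. -/
def IsReflection {A B : Type*} (leA : A → A → Prop) (nA : A → ℕ)
    (leB : B → B → Prop) (nB : B → ℕ) (h : A → B) : Prop :=
  (∀ x y : A, leB (h x) (h y) → leA x y) ∧ ∀ x : A, nB (h x) ≤ nA x

/-- Disjoint-sum ordering. -/
def sumLe {A B : Type*} (leA : A → A → Prop) (leB : B → B → Prop) :
    A ⊕ B → A ⊕ B → Prop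
  | Sum.inl a, Sum.inl a' => leA a a'
  | Sum.inr b, Sum.inr b' => leB b b'
  | _, _ => False

/-!
A pair `(a, b)` outside the upward cone of `(x, y)` has `x ≰ a` or `y ≰ b`: send it to the left
summand when `x ≰ a` and to the right one otherwise, keeping both coordinates and hence the norm.
Elements of different summands are incomparable in the disjoint sum, so only pairs sent to the same
summand need to be compared, and there the order is that of `A × B`.
-/

section ResidualProd

variable {A B : Type*} (leA : A → A → Prop) (leB : B → B → Prop) (x : A) (y : B)

open Classical in
noncomputable def residualProdToSum (p : {p : A × B // ¬ (leA x p.1 ∧ leB y p.2)}) :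
    ({a : A // ¬ leA x a} × B) ⊕ (A × {b : B // ¬ leB y b}) :=
  if ha : leA x p.1.1 then Sum.inr (p.1.1, ⟨p.1.2, fun hb => p.2 ⟨ha, hb⟩⟩)
  else Sum.inl (⟨p.1.1, ha⟩, p.1.2)

theorem le_of_sumLe_residualProdToSum (p q : {p : A × B // ¬ (leA x p.1 ∧ leB y p.2)})
    (hle : sumLe
      (fun p q : {a : A // ¬ leA x a} × B => leA p.1.1 q.1.1 ∧ leB p.2 q.2)
      (fun p q : A × {b : B // ¬ leB y b} => leA p.1 q.1 ∧ leB p.2.1 q.2.1)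
      (residualProdToSum leA leB x y p) (residualProdToSum leA leB x y q)) :
    leA p.1.1 q.1.1 ∧ leB p.1.2 q.1.2 := by
  unfold residualProdToSum at hle
  split_ifs at hle <;> first | exact hle | exact hle.elim

theorem norm_residualProdToSum (nA : A → ℕ) (nB : B → ℕ)
    (p : {p : A × B // ¬ (leA x p.1 ∧ leB y p.2)}) :
    Sum.elim (fun p => max (nA p.1.1) (nB p.2)) (fun p => max (nA p.1) (nB p.2.1))
      (residualProdToSum leA leB x y p) = max (nA p.1.1) (nB p.1.2) := by
  unfold residualProdToSum
  split_ifs <;> rfl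

end ResidualProd

theorem stmt6_general {A B : Type*}
    (leA : A → A → Prop) (nA : A → ℕ) (leB : B → B → Prop) (nB : B → ℕ)
    (x : A) (y : B) :
    ∃ h : {p : A × B // ¬ (leA x p.1 ∧ leB y p.2)} →
        ({a : A // ¬ leA x a} × B) ⊕ (A × {b : B // ¬ leB y b}),
      IsReflection
        (fun p q : {p : A × B // ¬ (leA x p.1 ∧ leB y p.2)} =>
          leA p.1.1 q.1.1 ∧ leB p.1.2 q.1.2)
        (fun p => max (nA p.1.1) (nB p.1.2))
        (sumLe
          (fun p q : {a : A // ¬ leA x a} × B => leA p.1.1 q.1.1 ∧ leB p.2 q.2)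
          (fun p q : A × {b : B // ¬ leB y b} => leA p.1 q.1 ∧ leB p.2.1 q.2.1))
        (Sum.elim (fun p => max (nA p.1.1) (nB p.2)) (fun p => max (nA p.1) (nB p.2.1)))
        h :=
  ⟨residualProdToSum leA leB x y,
    le_of_sumLe_residualProdToSum leA leB x y,
    fun p => (norm_residualProdToSum leA leB x y nA nB p).le⟩

/-- (A × B)/⟨x,y⟩ reflects into ((A/x) × B) + (A × (B/y)). -/
theorem stmt6 {A B : Type*}
    (leA : A → A → Prop) (nA : A → ℕ) (leB : B → B → Prop) (nB : B → ℕ)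
    (hreflA : ∀ a, leA a a) (htransA : ∀ a b c, leA a b → leA b c → leA a c)
    (hwqoA : ∀ f : ℕ → A, ∃ i j, i < j ∧ leA (f i) (f j))
    (hproperA : ∀ n, {a : A | nA a < n}.Finite)
    (hreflB : ∀ a, leB a a) (htransB : ∀ a b c, leB a b → leB b c → leB a c)
    (hwqoB : ∀ f : ℕ → B, ∃ i j, i < j ∧ leB (f i) (f j))
    (hproperB : ∀ n, {b : B | nB b < n}.Finite)
    (x : A) (y : B) :
    ∃ h : {p : A × B // ¬ (leA x p.1 ∧ leB y p.2)} →
        ({a : A // ¬ leA x a} × B) ⊕ (A × {b : B // ¬ leB y b}),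
      IsReflection
        (fun p q : {p : A × B // ¬ (leA x p.1 ∧ leB y p.2)} =>
          leA p.1.1 q.1.1 ∧ leB p.1.2 q.1.2)
        (fun p => max (nA p.1.1) (nB p.1.2))
        (sumLe
          (fun p q : {a : A // ¬ leA x a} × B => leA p.1.1 q.1.1 ∧ leB p.2 q.2)
          (fun p q : A × {b : B // ¬ leB y b} => leA p.1 q.1 ∧ leB p.2.1 q.2.1))
        (Sum.elim (fun p => max (nA p.1.1) (nB p.2)) (fun p => max (nA p.1) (nB p.2.1)))
        h :=
  stmt6_general leA nA leB nB x y
end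

section
/- For a nonempty normed wqo A and elements x₁, ..., x_n ∈ A with n ≥ 1, the residual A*/(x₁...x_n) reflects into (A/x₁)* × (1 + (↑_A x₁) × (A*/(x₂...x_n))), where ↑_A x₁ = {y ∈ A : x₁ ≤ y} and 1 denotes a singleton nwqo with norm 0. -/
/-- Norm of a word: max of its length and the norms of its letters. -/
def listNrm {A : Type*} (nA : A → ℕ) (w : List A) : ℕ :=
  max w.length ((w.map nA).foldr max 0)


/-!
Split a word `v` of the residual `A*/(x·rest)` as `v = u ++ w`, where `u` is the longest prefix
of `v` all of whose letters lie in `A/x`. Either `w` is empty, or `w = a :: w'` with `x ≤ a`; in the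
latter case `rest` does not embed into `w'`, since otherwise `x·rest` would embed into `v`.
Gluing the pieces back together is monotone and does not decrease norms, so the splitting map is a
reflection.
-/

open List

namespace HigmanResidual

variable {A : Type*}

theorem _root_.List.SublistForall₂.append {R : A → A → Prop} {l₁ l₂ l₃ l₄ : List A}
    (h₁ : SublistForall₂ R l₁ l₂) (h₂ : SublistForall₂ R l₃ l₄) :
    SublistForall₂ R (l₁ ++ l₃) (l₂ ++ l₄) := by
  obtain ⟨m₁, hf₁, hs₁⟩ := sublistForall₂_iff.1 h₁
  obtain ⟨m₂, hf₂, hs₂⟩ := sublistForall₂_iff.1 h₂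
  exact sublistForall₂_iff.2 ⟨m₁ ++ m₂, rel_append hf₁ hf₂, hs₁.append hs₂⟩

section Norm

variable (nA : A → ℕ)

theorem listNrm_mono {l m : List A} (h : l <+ m) : listNrm nA l ≤ listNrm nA m :=
  max_le_max h.length_le <| List.max_le_of_forall_le _ _ fun _ hb =>
    List.le_max_of_le ((h.map nA).subset hb) le_rfl

theorem le_listNrm_of_mem {a : A} {l : List A} (h : a ∈ l) : nA a ≤ listNrm nA l :=
  le_max_of_le_right <| List.le_max_of_le (mem_map_of_mem h) le_rfl

theorem listNrm_comp {B : Type*} (f : B → A) (l : List B) :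
    listNrm (fun b => nA (f b)) l = listNrm nA (l.map f) := by
  simp [listNrm, Function.comp_def]

end Norm

variable (leA : A → A → Prop)

/-- `A*/u`. -/
abbrev Residual (u : List A) : Type _ := {v : List A // ¬ SublistForall₂ leA u v}

/-- `A/x`. -/
abbrev Avoiding (x : A) : Type _ := {a : A // ¬ leA x a}

/-- `↑_A x`. -/
abbrev Above (x : A) : Type _ := {a : A // leA x a}

/-- The target `(A/x)* × (1 + ↑_A x × A*/rest)`, with `1 = Unit`. -/
abbrev SplitTarget (x : A) (rest : List A) : Type _ :=
  List (Avoiding leA x) × (Unit ⊕ (Above leA x × Residual leA rest))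

variable (x : A)

open scoped Classical in
noncomputable def notAbove (a : A) : Bool := decide (¬ leA x a)

variable {leA x}

theorem notAbove_eq_true {a : A} : notAbove leA x a = true ↔ ¬ leA x a := by
  simp [notAbove]

theorem le_of_dropWhile_notAbove_eq_cons {v w : List A} {a : A}
    (h : v.dropWhile (notAbove leA x) = a :: w) : leA x a := by
  have hhead := head_dropWhile_not (notAbove leA x) (l := v) (by simp [h])
  simpa [h, notAbove] using hhead

theorem not_sublistForall₂_of_dropWhile_notAbove_eq_cons {rest v w : List A} {a : A}
    (hv : ¬ SublistForall₂ leA (x :: rest) v) (h : v.dropWhile (notAbove leA x) = a :: w) :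
    ¬ SublistForall₂ leA rest w := fun hw => hv <| by
  rw [← takeWhile_append_dropWhile (p := notAbove leA x) (l := v), h, ← nil_append (x :: rest)]
  exact SublistForall₂.nil.append (.cons (le_of_dropWhile_notAbove_eq_cons h) hw)

variable (leA x)

noncomputable def residualSplit (rest : List A) (v : Residual leA (x :: rest)) :
    SplitTarget leA x rest :=
  ((v.1.takeWhile (notAbove leA x)).attachWith _
      fun _ ha => notAbove_eq_true.1 (mem_takeWhile_imp ha),
    match h : v.1.dropWhile (notAbove leA x) with
    | [] => Sum.inl ()
    | a :: w => Sum.inr (⟨a, le_of_dropWhile_notAbove_eq_cons h⟩,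
        ⟨w, not_sublistForall₂_of_dropWhile_notAbove_eq_cons v.2 h⟩))

def residualJoin {rest : List A} (p : SplitTarget leA x rest) : List A :=
  p.1.map Subtype.val ++ Sum.elim (fun _ => []) (fun q => q.1.1 :: q.2.1) p.2

variable {leA x}

theorem residualJoin_residualSplit {rest : List A} (v : Residual leA (x :: rest)) :
    residualJoin leA x (residualSplit leA x rest v) = v.1 := by
  conv_rhs => rw [← takeWhile_append_dropWhile (p := notAbove leA x) (l := v.1)]
  unfold residualJoin residualSplit
  dsimp only
  congr 1
  · exact unattach_attachWith ..
  · split <;> simp_all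

theorem residualJoin_mono {rest : List A} {p q : SplitTarget leA x rest}
    (h₁ : SublistForall₂ (fun a b : Avoiding leA x => leA a.1 b.1) p.1 q.1)
    (h₂ : sumLe (fun _ _ : Unit => True)
      (fun u v : Above leA x × Residual leA rest =>
        leA u.1.1 v.1.1 ∧ SublistForall₂ leA u.2.1 v.2.1) p.2 q.2) :
    SublistForall₂ leA (residualJoin leA x p) (residualJoin leA x q) := by
  refine .append (by simpa only [sublistForall₂_map_left_iff, sublistForall₂_map_right_iff]) ?_
  rcases p with ⟨_, _ | ⟨a, w⟩⟩ <;> rcases q with ⟨_, _ | ⟨b, w'⟩⟩ <;> simp only [sumLe] at h₂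
  · exact .nil
  · exact .cons h₂.1 h₂.2

theorem norm_le_listNrm_residualJoin (nA : A → ℕ) {rest : List A} (p : SplitTarget leA x rest) :
    max (listNrm (fun a : Avoiding leA x => nA a.1) p.1)
      (Sum.elim (fun _ : Unit => 0)
        (fun q : Above leA x × Residual leA rest => max (nA q.1.1) (listNrm nA q.2.1)) p.2) ≤
      listNrm nA (residualJoin leA x p) := by
  refine max_le ?_ ?_
  · rw [listNrm_comp]
    exact listNrm_mono nA (sublist_append_left _ _)
  · rcases p with ⟨u, _ | ⟨a, w⟩⟩
    · exact Nat.zero_le _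
    · exact max_le (le_listNrm_of_mem nA (mem_append_right _ mem_cons_self))
        (listNrm_mono nA ((sublist_cons_self _ _).trans (sublist_append_right _ _)))

end HigmanResidual

open HigmanResidual in
theorem stmt7_general {A : Type*} (leA : A → A → Prop) (nA : A → ℕ)
    (x : A) (rest : List A) :
    ∃ h : {v : List A // ¬ List.SublistForall₂ leA (x :: rest) v} →
        List {a : A // ¬ leA x a} ×
          (Unit ⊕ ({a : A // leA x a} × {v : List A // ¬ List.SublistForall₂ leA rest v})),
      IsReflection
        (fun v w : {v : List A // ¬ List.SublistForall₂ leA (x :: rest) v} =>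
          List.SublistForall₂ leA v.1 w.1)
        (fun v => listNrm nA v.1)
        (fun p q =>
          List.SublistForall₂ (fun a b : {a : A // ¬ leA x a} => leA a.1 b.1) p.1 q.1 ∧
          sumLe (fun _ _ : Unit => True)
            (fun u v : {a : A // leA x a} × {v : List A // ¬ List.SublistForall₂ leA rest v} =>
              leA u.1.1 v.1.1 ∧ List.SublistForall₂ leA u.2.1 v.2.1)
            p.2 q.2)
        (fun p => max (listNrm (fun a : {a : A // ¬ leA x a} => nA a.1) p.1)
          (Sum.elim (fun _ : Unit => 0)
            (fun q : {a : A // leA x a} × {v : List A // ¬ List.SublistForall₂ leA rest v} =>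
              max (nA q.1.1) (listNrm nA q.2.1)) p.2))
        h := by
  refine ⟨residualSplit leA x rest, fun v w ⟨h₁, h₂⟩ => ?_, fun v => ?_⟩
  · show SublistForall₂ leA v.1 w.1
    rw [← residualJoin_residualSplit v, ← residualJoin_residualSplit w]
    exact residualJoin_mono h₁ h₂
  · simpa only [residualJoin_residualSplit] using
      norm_le_listNrm_residualJoin nA (residualSplit leA x rest v)

/-- For a nonempty nwqo A and a nonempty word x :: rest,
A*/(x·rest) reflects into (A/x)* × (1 + ↑x × (A*/rest)). -/
theorem stmt7 {A : Type*} (leA : A → A → Prop) (nA : A → ℕ)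
    (hne : Nonempty A)
    (hrefl : ∀ a, leA a a) (htrans : ∀ a b c, leA a b → leA b c → leA a c)
    (hwqo : ∀ f : ℕ → A, ∃ i j, i < j ∧ leA (f i) (f j))
    (hproper : ∀ n, {a : A | nA a < n}.Finite)
    (x : A) (rest : List A) :
    ∃ h : {v : List A // ¬ List.SublistForall₂ leA (x :: rest) v} →
        List {a : A // ¬ leA x a} ×
          (Unit ⊕ ({a : A // leA x a} × {v : List A // ¬ List.SublistForall₂ leA rest v})),
      IsReflection
        (fun v w : {v : List A // ¬ List.SublistForall₂ leA (x :: rest) v} =>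
          List.SublistForall₂ leA v.1 w.1)
        (fun v => listNrm nA v.1)
        (fun p q =>
          List.SublistForall₂ (fun a b : {a : A // ¬ leA x a} => leA a.1 b.1) p.1 q.1 ∧
          sumLe (fun _ _ : Unit => True)
            (fun u v : {a : A // leA x a} × {v : List A // ¬ List.SublistForall₂ leA rest v} =>
              leA u.1.1 v.1.1 ∧ List.SublistForall₂ leA u.2.1 v.2.1)
            p.2 q.2)
        (fun p => max (listNrm (fun a : {a : A // ¬ leA x a} => nA a.1) p.1)
          (Sum.elim (fun _ : Unit => 0)
            (fun q : {a : A // leA x a} × {v : List A // ¬ List.SublistForall₂ leA rest v} =>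
              max (nA q.1.1) (listNrm nA q.2.1)) p.2))
        h :=
  stmt7_general leA nA x rest
end

section
/- For the finite alphabet Γ_{p+1} (an antichain of p+1 letters of norm 0) and any word (x₁...x_n) ∈ Γ_{p+1}*, the residual Γ_{p+1}*/(x₁...x_n) reflects into Γ_n × (Γ_p*)^n. -/
namespace List

variable {α : Type*}

theorem sublistForall₂_eq_iff_sublist {l₁ l₂ : List α} :
    SublistForall₂ (· = ·) l₁ l₂ ↔ l₁ <+ l₂ := by
  simp only [sublistForall₂_iff, forall₂_eq_eq_eq, exists_eq_left']

variable [DecidableEq α] {x : α} {v : List α}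

theorem eq_takeWhile_ne_append_cons_of_mem (h : x ∈ v) :
    v = v.takeWhile (· ≠ x) ++ x :: (v.dropWhile (· ≠ x)).tail := by
  induction v with
  | nil => simp at h
  | cons y t ih =>
    by_cases hy : y = x
    · simp [hy]
    · simpa [takeWhile_cons, dropWhile_cons, hy] using ih (by simpa [Ne.symm hy] using h)

theorem not_mem_takeWhile_ne : x ∉ v.takeWhile (· ≠ x) :=
  fun h => by simpa using mem_takeWhile_imp h

end List

open List

section Relabel

variable {p : ℕ} {a : Fin (p + 1)} {l l₁ l₂ : List (Fin (p + 1))}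

-- `finSuccEquiv' a` identifies the letters other than `a` with `Fin p`, i.e. Γ_{p+1}/a ≅ Γ_p.
def relabel (a : Fin (p + 1)) (l : List (Fin (p + 1))) : List (Fin p) :=
  l.filterMap (finSuccEquiv' a)

theorem map_succAbove_relabel (h : a ∉ l) : (relabel a l).map a.succAbove = l := by
  induction l with
  | nil => rfl
  | cons b t ih =>
    obtain ⟨c, rfl⟩ := Fin.exists_succAbove_eq (x := b) (y := a) (fun hb => h (hb ▸ mem_cons_self))
    simp_all [relabel]

theorem length_relabel_le : (relabel a l).length ≤ l.length :=
  length_filterMap_le _ _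

theorem sublist_of_relabel_sublist (h₁ : a ∉ l₁) (h₂ : a ∉ l₂)
    (h : relabel a l₁ <+ relabel a l₂) : l₁ <+ l₂ := by
  simpa only [map_succAbove_relabel h₁, map_succAbove_relabel h₂] using h.map a.succAbove

end Relabel

section ResidualCode

variable {p : ℕ}

-- The greedy factorisation v = v₁ x₁ v₂ x₂ ⋯ along w = x₁ ⋯ x_n, each factor v_i relabelled by x_i:
-- every x_i is matched at its first occurrence, so x_i ∉ v_i, and once some x_i does not occur in
-- what is left, that remainder is the last factor.
def residualCode : List (Fin (p + 1)) → List (Fin (p + 1)) → List (List (Fin p))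
  | [], _ => []
  | x :: w, v =>
    if x ∈ v then
      relabel x (v.takeWhile (· ≠ x)) :: residualCode w (v.dropWhile (· ≠ x)).tail
    else [relabel x v]

variable {w v u : List (Fin (p + 1))}

theorem length_residualCode_le : (residualCode w v).length ≤ w.length := by
  induction w generalizing v with
  | nil => simp [residualCode]
  | cons x w ih =>
    unfold residualCode
    split_ifs <;> simp [ih]

theorem residualCode_ne_nil (hw : w ≠ []) : residualCode w v ≠ [] := by
  obtain ⟨x, w, rfl⟩ := exists_cons_of_ne_nil hw
  unfold residualCode
  split_ifs <;> simp

theorem length_le_of_mem_residualCode {l : List (Fin p)} (hl : l ∈ residualCode w v) :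
    l.length ≤ v.length := by
  induction w generalizing v with
  | nil => simp [residualCode] at hl
  | cons x w ih =>
    unfold residualCode at hl
    split_ifs at hl with hx
    · rcases mem_cons.mp hl with rfl | hl
      · exact length_relabel_le.trans (takeWhile_sublist _).length_le
      · exact (ih hl).trans ((tail_sublist _).trans (dropWhile_sublist _)).length_le
    · rw [mem_singleton.mp hl]
      exact length_relabel_le

theorem length_getD_residualCode_le (i : ℕ) :
    ((residualCode w v).getD i []).length ≤ v.length := by
  rcases lt_or_ge i (residualCode w v).length with hi | hi
  · rw [getD_eq_getElem _ _ hi]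
    exact length_le_of_mem_residualCode (getElem_mem hi)
  · rw [getD_eq_default _ _ hi, length_nil]
    exact Nat.zero_le _

theorem sublist_of_forall₂_residualCode (hv : ¬ w <+ v) (hu : ¬ w <+ u)
    (h : Forall₂ Sublist (residualCode w v) (residualCode w u)) : v <+ u := by
  induction w generalizing v u with
  | nil => exact absurd (nil_sublist v) hv
  | cons x w ih =>
    have tail_not_sublist {v} (hx : x ∈ v) (hv : ¬ x :: w <+ v) :
        ¬ w <+ (v.dropWhile (· ≠ x)).tail := fun hw => hv <| by
      rw [eq_takeWhile_ne_append_cons_of_mem hx]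
      exact (hw.cons_cons x).trans (sublist_append_right _ _)
    have w_ne_nil {v} (hx : x ∈ v) (hv : ¬ x :: w <+ v) : w ≠ [] := by
      rintro rfl
      exact hv (singleton_sublist.mpr hx)
    unfold residualCode at h
    by_cases hxv : x ∈ v <;> by_cases hxu : x ∈ u <;> simp only [hxv, hxu, if_true, if_false] at h
    · obtain ⟨hhead, htail⟩ := forall₂_cons.mp h
      rw [eq_takeWhile_ne_append_cons_of_mem hxv, eq_takeWhile_ne_append_cons_of_mem hxu]
      exact (sublist_of_relabel_sublist not_mem_takeWhile_ne not_mem_takeWhile_ne hhead).append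
        ((ih (tail_not_sublist hxv hv) (tail_not_sublist hxu hu) htail).cons_cons x)
    · exact absurd (forall₂_nil_right_iff.mp (forall₂_cons.mp h).2)
        (residualCode_ne_nil (w_ne_nil hxv hv))
    · exact absurd (forall₂_nil_left_iff.mp (forall₂_cons.mp h).2)
        (residualCode_ne_nil (w_ne_nil hxu hu))
    · exact sublist_of_relabel_sublist hxv hxu (forall₂_cons.mp h).1

end ResidualCode

/-- For Γ_{p+1} = `Fin (p+1)` (an antichain, ordered by equality, letters of
norm 0) and any word w = x₁...x_n over it, the residual Γ_{p+1}*/w reflects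
into Γ_n × (Γ_p*)^n.  Words are normed by their length. -/
theorem stmt9 (p : ℕ) (w : List (Fin (p + 1))) :
    ∃ h : {v : List (Fin (p + 1)) // ¬ List.SublistForall₂ (· = ·) w v} →
        Fin w.length × (Fin w.length → List (Fin p)),
      IsReflection
        (fun v u : {v : List (Fin (p + 1)) // ¬ List.SublistForall₂ (· = ·) w v} =>
          List.SublistForall₂ (· = ·) v.1 u.1)
        (fun v => v.1.length)
        (fun a b =>
          a.1 = b.1 ∧ ∀ i, List.SublistForall₂ (· = ·) (a.2 i) (b.2 i))
        (fun a => Finset.univ.sup fun i => (a.2 i).length)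
        h := by
  rcases eq_or_ne w [] with rfl | hw
  · exact ⟨fun v => absurd .nil v.2, fun v => absurd .nil v.2, fun v => absurd .nil v.2⟩
  have length_pos v : 0 < (residualCode w v).length :=
    length_pos_iff.mpr (residualCode_ne_nil hw)
  refine ⟨fun v => (⟨(residualCode w v.1).length - 1,
      Nat.sub_one_lt_of_le (length_pos v.1) length_residualCode_le⟩,
    fun i => (residualCode w v.1).getD i []), ?_,
    fun v => Finset.sup_le fun i _ => length_getD_residualCode_le i⟩
  · rintro ⟨v, hv⟩ ⟨u, hu⟩ ⟨hk, hpieces⟩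
    simp only [sublistForall₂_eq_iff_sublist, Fin.mk.injEq] at hv hu hk hpieces ⊢
    have hlen : (residualCode w v).length = (residualCode w u).length := by
      have := length_pos v; have := length_pos u; omega
    refine sublist_of_forall₂_residualCode hv hu (forall₂_iff_get.mpr ⟨hlen, fun i hi hi' => ?_⟩)
    simpa [getD_eq_getElem, hi, hi'] using hpieces ⟨i, hi.trans_le length_residualCode_le⟩
end
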